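/- arXiv:1407.5246 — 4 statements merged into one kernel-verified Lean document; each statement's English description precedes it below -/
import Mathlib

section
/- Let D₁, D₂, μ, ū, α, φ̄, f′ be positive real numbers and let (λ_k)_{k≥1} be a sequence of positive real numbers. For each k let H_k = [[−D₁λ_k − μū, χφ̄λ_k], [f′, −D₂λ_k − α]] and g(λ) = (D₁λ + μū)(D₂λ + α)/(f′ φ̄ λ). Suppose k₀ is an index with g(λ_{k₀}) ≤ g(λ_k) for all k ≥ 1, and set χ₀ = g(λ_{k₀}). Then there exists k ≥ 1 such that the characteristic polynomial of H_k has a complex root with positive real part if and only if χ > χ₀. -/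
lemma quad_root_iff (T q : ℝ) (hT : T < 0) :
    (∃ z : ℂ, z ^ 2 - (T : ℂ) * z + (q : ℂ) = 0 ∧ 0 < z.re) ↔ q < 0 := by
  constructor
  · rintro ⟨z, hz, hre⟩
    have him := congrArg Complex.im hz
    have hreq := congrArg Complex.re hz
    simp [pow_two, Complex.mul_im, Complex.mul_re] at him hreq
    have hy : z.im = 0 := by nlinarith
    rw [hy] at hreq
    nlinarith
  · intro hq
    have hnn : (0:ℝ) ≤ T ^ 2 - 4 * q := by nlinarith
    set s := Real.sqrt (T ^ 2 - 4 * q) with hs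
    have hs2 : s ^ 2 = T ^ 2 - 4 * q := Real.sq_sqrt hnn
    have hsT : -T < s := by
      have : Real.sqrt (T ^ 2) < s := by
        apply Real.sqrt_lt_sqrt (sq_nonneg T); nlinarith
      rwa [Real.sqrt_sq_eq_abs, abs_of_neg hT] at this
    refine ⟨(((T + s) / 2 : ℝ) : ℂ), ?_, by simpa using by linarith⟩
    have : ((T + s) / 2) ^ 2 - T * ((T + s) / 2) + q = 0 := by nlinarith
    exact_mod_cast congrArg (Complex.ofReal) this

/-- Proposition 1 (linear-algebraic content): some linearization matrix
`H_k = [[−D₁λ_k − μū, χφ̄λ_k], [f′, −D₂λ_k − α]]` has a characteristic root with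
positive real part iff `χ > χ₀ = min_{k ∈ ℕ⁺} g(λ_k)`, where
`g(λ) = (D₁λ + μū)(D₂λ + α)/(f′ φ̄ λ)`. -/
theorem stmt5 (D₁ D₂ μ uBar α φBar f' χ : ℝ)
    (hD₁ : 0 < D₁) (hD₂ : 0 < D₂) (hμ : 0 < μ) (hu : 0 < uBar) (hα : 0 < α)
    (hφ : 0 < φBar) (hf' : 0 < f')
    (lam : ℕ → ℝ) (hlampos : ∀ k ≥ 1, 0 < lam k)
    (g : ℝ → ℝ)
    (hg : ∀ l : ℝ, g l = (D₁ * l + μ * uBar) * (D₂ * l + α) / (f' * φBar * l))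
    (k₀ : ℕ) (hk₀ : k₀ ≥ 1) (hmin : ∀ k ≥ 1, g (lam k₀) ≤ g (lam k)) :
    (∃ k ≥ 1, ∃ z : ℂ, Polynomial.aeval z
        (Matrix.charpoly (!![-D₁ * lam k - μ * uBar, χ * φBar * lam k;
                             f', -D₂ * lam k - α])) = 0 ∧ 0 < z.re) ↔
      χ > g (lam k₀) := by
  have key : ∀ k ≥ 1,
      ((∃ z : ℂ, Polynomial.aeval z
        (Matrix.charpoly (!![-D₁ * lam k - μ * uBar, χ * φBar * lam k;
                             f', -D₂ * lam k - α])) = 0 ∧ 0 < z.re) ↔ χ > g (lam k)) := by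
    intro k hk
    have hl := hlampos k hk
    set a : ℝ := -D₁ * lam k - μ * uBar
    set d : ℝ := -D₂ * lam k - α
    set b : ℝ := χ * φBar * lam k
    have hcp : ∀ z : ℂ, Polynomial.aeval z (Matrix.charpoly !![a, b; f', d])
        = z ^ 2 - ((a + d : ℝ) : ℂ) * z + ((a * d - b * f' : ℝ) : ℂ) := by
      intro z
      rw [Matrix.charpoly, Matrix.det_fin_two]
      simp [Matrix.charmatrix_apply_eq, Matrix.charmatrix_apply_ne]
      push_cast
      ring
    have hT : a + d < 0 := by
      have := mul_pos hD₁ hl; have := mul_pos hD₂ hl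
      have := mul_pos hμ hu
      simp only [a, d]; nlinarith
    constructor
    · rintro ⟨z, hz, hre⟩
      rw [hcp] at hz
      have hq : a * d - b * f' < 0 := (quad_root_iff _ _ hT).mp ⟨z, hz, hre⟩
      rw [hg]
      rw [gt_iff_lt, div_lt_iff₀ (by positivity)]
      simp only [a, b, d] at hq
      nlinarith
    · intro hχ
      have hq : a * d - b * f' < 0 := by
        rw [hg, gt_iff_lt, div_lt_iff₀ (by positivity)] at hχ
        simp only [a, b, d]
        nlinarith
      obtain ⟨z, hz, hre⟩ := (quad_root_iff _ _ hT).mpr hq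
      exact ⟨z, by rw [hcp]; exact hz, hre⟩
  constructor
  · rintro ⟨k, hk, hz⟩
    exact lt_of_le_of_lt (hmin k hk) ((key k hk).mp hz)
  · intro hχ
    exact ⟨k₀, hk₀, (key k₀ hk₀).mpr hχ⟩
end

section
/- Let D₁, D₂, μ, ū, α be positive real numbers, λ > 0, φ̄ > 0, f′ ≠ 0, and set χ̄ = (D₁λ + μū)(D₂λ + α)/(f′ φ̄ λ). Consider the 2×2 real matrix M = [[−D₁λ − μū, λχ̄φ̄], [f′, −D₂λ − α]]. Then the vector (−λφ̄, 0) does NOT lie in the range of the linear map x ↦ M·x on ℝ². -/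
/-! At `χ = χ̄` the determinant `(D₁λ + μū)(D₂λ + α) − λχ̄φ̄ f′` of `M` vanishes. For a 2×2
matrix `[[a, b], [c, d]]` the combination `c y₀ − a y₁` of the components of `y = M x` equals
`−det M · x₁`, so every vector in the range satisfies `f′ y₀ = (−D₁λ − μū) y₁`; the vector
`(−λφ̄, 0)` does not, because `f′ λ φ̄ ≠ 0`. -/

namespace Matrix

theorem fin_two_mulVec_row_combination {R : Type*} [CommRing R] (a b c d : R) (x : Fin 2 → R) :
    c * (!![a, b; c, d] *ᵥ x) 0 - a * (!![a, b; c, d] *ᵥ x) 1 = -(!![a, b; c, d].det * x 1) := by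
  simp only [mulVec, dotProduct, Fin.sum_univ_two, of_apply, cons_val_zero, cons_val_one,
    det_fin_two_of]
  ring

theorem fin_two_not_exists_mulVec_eq_of_det_eq_zero {R : Type*} [CommRing R] [NoZeroDivisors R]
    {a b c d v : R} (hdet : !![a, b; c, d].det = 0) (hc : c ≠ 0) (hv : v ≠ 0) :
    ¬ ∃ x : Fin 2 → R, !![a, b; c, d] *ᵥ x = ![v, 0] := by
  rintro ⟨x, hx⟩
  have h := fin_two_mulVec_row_combination a b c d x
  simp only [hx, hdet, cons_val_zero, cons_val_one, mul_zero, sub_zero, zero_mul, neg_zero] at h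
  exact mul_ne_zero hc hv h

end Matrix

theorem stmt10_general (D₁ D₂ μ uBar α lam φBar f' : ℝ)
    (hlam : 0 < lam) (hφ : 0 < φBar) (hf' : f' ≠ 0)
    (χBar : ℝ)
    (hχ : χBar = (D₁ * lam + μ * uBar) * (D₂ * lam + α) / (f' * φBar * lam)) :
    ¬ ∃ x : Fin 2 → ℝ,
        Matrix.mulVec (!![-D₁ * lam - μ * uBar, lam * χBar * φBar;
                          f', -D₂ * lam - α]) x = ![-lam * φBar, 0] := by
  have hdet : !![-D₁ * lam - μ * uBar, lam * χBar * φBar; f', -D₂ * lam - α].det = 0 := by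
    rw [Matrix.det_fin_two_of, hχ]
    field_simp
    ring
  exact Matrix.fin_two_not_exists_mulVec_eq_of_det_eq_zero hdet hf'
    (mul_ne_zero (neg_ne_zero.mpr hlam.ne') hφ.ne')

/-- Transversality condition: at the bifurcation value `χ̄`, the vector
`(−λφ̄, 0)` does not lie in the range of the projected linearization matrix
`M = [[−D₁λ − μū, λχ̄φ̄], [f′, −D₂λ − α]]`. -/
theorem stmt10 (D₁ D₂ μ uBar α lam φBar f' : ℝ)
    (hD₁ : 0 < D₁) (hD₂ : 0 < D₂) (hμ : 0 < μ) (hu : 0 < uBar) (hα : 0 < α)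
    (hlam : 0 < lam) (hφ : 0 < φBar) (hf' : f' ≠ 0)
    (χBar : ℝ)
    (hχ : χBar = (D₁ * lam + μ * uBar) * (D₂ * lam + α) / (f' * φBar * lam)) :
    ¬ ∃ x : Fin 2 → ℝ,
        Matrix.mulVec (!![-D₁ * lam - μ * uBar, lam * χBar * φBar;
                          f', -D₂ * lam - α]) x = ![-lam * φBar, 0] :=
  stmt10_general D₁ D₂ μ uBar α lam φBar f' hlam hφ hf' χBar hχ
end

section
/- Let D₁, D₂, μ, ū, α be positive real numbers, λ > 0, φ̄ > 0, f′ > 0, and set χ̄ = (D₁λ + μū)(D₂λ + α)/(f′ φ̄ λ) and Q = (D₂λ + α)/f′. Consider the 2×2 real matrix M = [[−D₁λ − μū, λχ̄φ̄], [f′, −D₂λ − α]]. If γ is a real number such that the linear system M·x = (γQ − λφ̄, γ) has a solution x ∈ ℝ², then γ = λ f′ φ̄ / ((D₁ + D₂)λ + μū + α); in particular γ > 0. -/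
/-- Computation (3.18): if `M·x = (γQ − λφ̄, γ)` is solvable with
`M = [[−D₁λ − μū, λχ̄φ̄], [f′, −D₂λ − α]]` at the bifurcation value `χ̄` and
`Q = (D₂λ + α)/f′`, then `γ = λf′φ̄/((D₁+D₂)λ + μū + α) > 0`. -/
theorem stmt11 (D₁ D₂ μ uBar α lam φBar f' : ℝ)
    (hD₁ : 0 < D₁) (hD₂ : 0 < D₂) (hμ : 0 < μ) (hu : 0 < uBar) (hα : 0 < α)
    (hlam : 0 < lam) (hφ : 0 < φBar) (hf' : 0 < f')
    (χBar Q γ : ℝ)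
    (hχ : χBar = (D₁ * lam + μ * uBar) * (D₂ * lam + α) / (f' * φBar * lam))
    (hQ : Q = (D₂ * lam + α) / f')
    (hsol : ∃ x : Fin 2 → ℝ,
        Matrix.mulVec (!![-D₁ * lam - μ * uBar, lam * χBar * φBar;
                          f', -D₂ * lam - α]) x = ![γ * Q - lam * φBar, γ]) :
    γ = lam * f' * φBar / ((D₁ + D₂) * lam + μ * uBar + α) ∧ 0 < γ := by
  obtain ⟨x, hx⟩ := hsol
  have h0 := congrFun hx 0
  have h1 := congrFun hx 1
  simp [Matrix.mulVec, dotProduct, Fin.sum_univ_two] at h0 h1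
  have hden : (D₁ + D₂) * lam + μ * uBar + α > 0 := by positivity
  have hchi : lam * χBar * φBar = (D₁ * lam + μ * uBar) * (D₂ * lam + α) / f' := by
    rw [hχ]; field_simp
  subst hQ
  have key : γ * ((D₁ + D₂) * lam + μ * uBar + α) = lam * f' * φBar := by
    have c := congrArg (fun t => f' * t + (D₁ * lam + μ * uBar) * γ) h0
    rw [hchi] at c
    field_simp at c
    linear_combination -c - (D₁ * lam + μ * uBar) * h1
  constructor
  · field_simp
    linarith [key]
  · have : γ = lam * f' * φBar / ((D₁ + D₂) * lam + μ * uBar + α) := by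
      field_simp; linarith [key]
    rw [this]; positivity
end

section
/- Let L > 0 and λ be real numbers, and let Φ : ℝ → ℝ be twice continuously differentiable on [0, L] with Φ″(x) = −λΦ(x) for all x ∈ [0, L] and Φ′(0) = Φ′(L) = 0. Then ∫₀ᴸ Φ(x)·(Φ′(x))² dx = (λ/2)·∫₀ᴸ Φ(x)³ dx. -/
open Set MeasureTheory

/-- Integration by parts with `u = f²`, `v = f'`. -/
theorem integral_mul_deriv_sq_eq {a b : ℝ} {f f' f'' : ℝ → ℝ}
    (hf : ∀ x ∈ uIcc a b, HasDerivAt f (f' x) x)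
    (hf' : ∀ x ∈ uIcc a b, HasDerivAt f' (f'' x) x)
    (hf'' : IntervalIntegrable f'' volume a b) :
    ∫ x in a..b, f x * f' x ^ 2 =
      (f b ^ 2 * f' b - f a ^ 2 * f' a - ∫ x in a..b, f x ^ 2 * f'' x) / 2 := by
  have hfc : ContinuousOn f (uIcc a b) := HasDerivAt.continuousOn hf
  have hf'c : ContinuousOn f' (uIcc a b) := HasDerivAt.continuousOn hf'
  have hsq : ∀ x ∈ uIcc a b, HasDerivAt (fun x => f x ^ 2) (2 * f x * f' x) x :=
    fun x hx => by simpa using (hf x hx).fun_pow 2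
  have hsq_int : IntervalIntegrable (fun x => 2 * f x * f' x) volume a b :=
    (by fun_prop : ContinuousOn (fun x => 2 * f x * f' x) (uIcc a b)).intervalIntegrable
  have parts := intervalIntegral.integral_mul_deriv_eq_deriv_mul hsq hf' hsq_int hf''
  have hrw : ∫ x in a..b, 2 * f x * f' x * f' x = 2 * ∫ x in a..b, f x * f' x ^ 2 := by
    rw [← intervalIntegral.integral_const_mul]
    congr 1 with x
    ring
  rw [hrw] at parts
  linarith

theorem stmt13_general (L lam : ℝ) (hL : 0 < L) (Φ Φ' : ℝ → ℝ)
    (hΦ : ∀ x ∈ Set.Icc (0 : ℝ) L, HasDerivAt Φ (Φ' x) x)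
    (hΦ' : ∀ x ∈ Set.Icc (0 : ℝ) L, HasDerivAt Φ' (-lam * Φ x) x)
    (h0 : Φ' 0 = 0) (hLend : Φ' L = 0) :
    ∫ x in (0 : ℝ)..L, Φ x * (Φ' x) ^ 2 =
      (lam / 2) * ∫ x in (0 : ℝ)..L, (Φ x) ^ 3 := by
  rw [← uIcc_of_le hL.le] at hΦ hΦ'
  have hΦc : ContinuousOn Φ (uIcc 0 L) := HasDerivAt.continuousOn hΦ
  have hint : IntervalIntegrable (fun x => -lam * Φ x) volume 0 L :=
    (by fun_prop : ContinuousOn (fun x => -lam * Φ x) (uIcc 0 L)).intervalIntegrable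
  have hcube :
      ∫ x in (0 : ℝ)..L, Φ x ^ 2 * (-lam * Φ x) = -lam * ∫ x in (0 : ℝ)..L, Φ x ^ 3 := by
    rw [← intervalIntegral.integral_const_mul]
    congr 1 with x
    ring
  rw [integral_mul_deriv_sq_eq hΦ hΦ' hint, h0, hLend, hcube]
  ring

/-- Identity (3.11) in one dimension: if `Φ` is twice continuously
differentiable on `[0, L]` with `Φ″ = −λΦ` on `[0, L]` and Neumann boundary
conditions `Φ′(0) = Φ′(L) = 0`, then
`∫₀ᴸ Φ (Φ′)² = (λ/2) ∫₀ᴸ Φ³`. -/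
theorem stmt13 (L lam : ℝ) (hL : 0 < L) (Φ Φ' : ℝ → ℝ)
    (hΦ : ∀ x ∈ Set.Icc (0 : ℝ) L, HasDerivAt Φ (Φ' x) x)
    (hΦ' : ∀ x ∈ Set.Icc (0 : ℝ) L, HasDerivAt Φ' (-lam * Φ x) x)
    (hcont : ContinuousOn (fun x => -lam * Φ x) (Set.Icc (0 : ℝ) L))
    (h0 : Φ' 0 = 0) (hLend : Φ' L = 0) :
    ∫ x in (0 : ℝ)..L, Φ x * (Φ' x) ^ 2 =
      (lam / 2) * ∫ x in (0 : ℝ)..L, (Φ x) ^ 3 :=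
  stmt13_general L lam hL Φ Φ' hΦ hΦ' h0 hLend
end
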